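/- Let Ω be a locally compact separable metric space and m a mean on BC(Ω × Ω) with margins m₁, m₂ defined by mᵢ(f) = m(f̃ᵢ) where f̃₁(x,y) = f(x) and f̃₂(x,y) = f(y). If m₁(∞) = m₂(∞) = 0, then m(∞) = 0. -/
import Mathlib


open MeasureTheory BoundedContinuousFunction

/-- `f` is a continuous compactly supported function with `0 ≤ f ≤ 1`. -/
def CcPosLeOne {α : Type*} [TopologicalSpace α] (f : α →ᵇ ℂ) : Prop :=
  HasCompactSupport ⇑f ∧ ∀ x, (f x).im = 0 ∧ 0 ≤ (f x).re ∧ (f x).re ≤ 1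

/-- Let `Ω` be a locally compact separable metric space and `m` a mean on
`BC(Ω × Ω)` with margins `m₁, m₂` (defined via `mᵢ(f) = m(f̃ᵢ)`, `f̃₁(x,y) = f(x)`,
`f̃₂(x,y) = f(y)`).  If `m₁(∞) = m₂(∞) = 0`, then `m(∞) = 0`
(conditions expressed as `sup{⋯} = 1`). -/
theorem stmt15 {Ω : Type*} [MetricSpace Ω] [LocallyCompactSpace Ω]
    [TopologicalSpace.SeparableSpace Ω]
    (m : ((Ω × Ω) →ᵇ ℂ) →ₗ[ℂ] ℂ)
    (hpos : ∀ f : (Ω × Ω) →ᵇ ℂ, (∀ x, (f x).im = 0 ∧ 0 ≤ (f x).re) →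
      (m f).im = 0 ∧ 0 ≤ (m f).re)
    (hone : m (const (Ω × Ω) (1 : ℂ)) = 1)
    (h1 : sSup {r : ℝ | ∃ f : Ω →ᵇ ℂ, CcPosLeOne f ∧
        r = (m (f.compContinuous ⟨Prod.fst, continuous_fst⟩)).re} = 1)
    (h2 : sSup {r : ℝ | ∃ f : Ω →ᵇ ℂ, CcPosLeOne f ∧
        r = (m (f.compContinuous ⟨Prod.snd, continuous_snd⟩)).re} = 1) :
    sSup {r : ℝ | ∃ g : (Ω × Ω) →ᵇ ℂ, CcPosLeOne g ∧ r = (m g).re} = 1 := by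
  set S := {r : ℝ | ∃ g : (Ω × Ω) →ᵇ ℂ, CcPosLeOne g ∧ r = (m g).re} with hS
  -- upper bound
  have hub : ∀ g : (Ω × Ω) →ᵇ ℂ,
      (∀ x, (g x).im = 0 ∧ 0 ≤ (g x).re ∧ (g x).re ≤ 1) → (m g).re ≤ 1 := by
    intro g hg
    have h := hpos (const (Ω × Ω) 1 - g) ?_
    · rw [map_sub, hone] at h
      have := h.2
      simp only [Complex.sub_re, Complex.one_re] at this
      linarith
    · intro x
      simp only [BoundedContinuousFunction.sub_apply, const_apply, Complex.sub_im,
        Complex.sub_re, Complex.one_im, Complex.one_re]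
      refine ⟨by rw [(hg x).1]; ring, by linarith [(hg x).2.2]⟩
  have hzero : CcPosLeOne (0 : (Ω × Ω) →ᵇ ℂ) := by
    constructor
    · exact HasCompactSupport.intro isCompact_empty (by intro x _; simp)
    · intro x; simp
  have hne : S.Nonempty := ⟨(m 0).re, 0, hzero, rfl⟩
  have hbdd : BddAbove S := ⟨1, by rintro r ⟨g, hg, rfl⟩; exact hub g hg.2⟩
  refine le_antisymm (csSup_le hne ?_) ?_
  · rintro r ⟨g, hg, rfl⟩; exact hub g hg.2
  · -- lower bound: 1 ≤ sSup S
    refine le_of_forall_sub_le ?_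
    intro ε hε
    -- nonemptiness of the margin sets
    have hne1 : {r : ℝ | ∃ f : Ω →ᵇ ℂ, CcPosLeOne f ∧
        r = (m (f.compContinuous ⟨Prod.fst, continuous_fst⟩)).re}.Nonempty := by
      by_contra hc
      rw [Set.not_nonempty_iff_eq_empty] at hc
      rw [hc, Real.sSup_empty] at h1
      norm_num at h1
    have hne2 : {r : ℝ | ∃ f : Ω →ᵇ ℂ, CcPosLeOne f ∧
        r = (m (f.compContinuous ⟨Prod.snd, continuous_snd⟩)).re}.Nonempty := by
      by_contra hc
      rw [Set.not_nonempty_iff_eq_empty] at hc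
      rw [hc, Real.sSup_empty] at h2
      norm_num at h2
    obtain ⟨r₁, hr₁mem, hr₁⟩ := exists_lt_of_lt_csSup hne1 (by rw [h1]; linarith : (1 : ℝ) - ε / 2 < _)
    obtain ⟨r₂, hr₂mem, hr₂⟩ := exists_lt_of_lt_csSup hne2 (by rw [h2]; linarith : (1 : ℝ) - ε / 2 < _)
    obtain ⟨f₁, hf₁, rfl⟩ := hr₁mem
    obtain ⟨f₂, hf₂, rfl⟩ := hr₂mem
    set F₁ := f₁.compContinuous (⟨Prod.fst, continuous_fst⟩ : C(Ω × Ω, Ω)) with hF₁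
    set F₂ := f₂.compContinuous (⟨Prod.snd, continuous_snd⟩ : C(Ω × Ω, Ω)) with hF₂
    set g : (Ω × Ω) →ᵇ ℂ := F₁ * F₂ with hg
    have hF₁x : ∀ x : Ω × Ω, F₁ x = f₁ x.1 := fun x => rfl
    have hF₂x : ∀ x : Ω × Ω, F₂ x = f₂ x.2 := fun x => rfl
    have hgx : ∀ x : Ω × Ω, g x = f₁ x.1 * f₂ x.2 := fun x => rfl
    have hgcc : CcPosLeOne g := by
      constructor
      · refine HasCompactSupport.intro (hf₁.1.prod hf₂.1) ?_
        intro x hx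
        rw [Set.mem_prod, not_and_or] at hx
        rw [hgx]
        rcases hx with hx | hx
        · rw [image_eq_zero_of_notMem_tsupport hx, zero_mul]
        · rw [image_eq_zero_of_notMem_tsupport hx, mul_zero]
      · intro x
        rw [hgx]
        obtain ⟨hi1, hr1, hr1'⟩ := hf₁.2 x.1
        obtain ⟨hi2, hr2, hr2'⟩ := hf₂.2 x.2
        refine ⟨?_, ?_, ?_⟩
        · rw [Complex.mul_im, hi1, hi2]; ring
        · rw [Complex.mul_re, hi1, hi2]; nlinarith
        · rw [Complex.mul_re, hi1, hi2]
          nlinarith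
    -- key inequality
    have hkey : (m F₁).re + (m F₂).re - 1 ≤ (m g).re := by
      have h := hpos (g - F₁ - F₂ + const (Ω × Ω) 1) ?_
      · rw [map_add, map_sub, map_sub, hone] at h
        have := h.2
        simp only [Complex.add_re, Complex.sub_re, Complex.one_re] at this
        linarith
      · intro x
        simp only [BoundedContinuousFunction.add_apply, BoundedContinuousFunction.sub_apply,
          const_apply]
        rw [hgx, hF₁x, hF₂x]
        obtain ⟨hi1, hr1, hr1'⟩ := hf₁.2 x.1
        obtain ⟨hi2, hr2, hr2'⟩ := hf₂.2 x.2
        constructor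
        · simp only [Complex.add_im, Complex.sub_im, Complex.mul_im, Complex.one_im,
            hi1, hi2]
          ring
        · simp only [Complex.add_re, Complex.sub_re, Complex.mul_re, Complex.one_re,
            hi1, hi2]
          nlinarith
    have hmem : (m g).re ∈ S := ⟨g, hgcc, rfl⟩
    calc 1 - ε ≤ (m g).re := by linarith
      _ ≤ sSup S := le_csSup hbdd hmem
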